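/- arXiv:2505.17606 — 7 statements merged into one kernel-verified Lean document; each statement's English description precedes it below -/
import Mathlib

section
/- Let n ≥ 1 and φ: ℝ → ℝ be (n+1)-times continuously differentiable near 0. If for every n-times continuously differentiable function f: ℝ → ℝ there exists a function e_n with e_n(x) → 0 as x → a such that f(x) = ∑_{k=0}^{n} (f^(k)(a)/k!) (φ(x-a))^k + e_n(x) (φ(x-a))^n for all x near a, then necessarily φ(0) = 0, φ'(0) = 1, and φ^(k)(0) = 0 for 2 ≤ k ≤ n. -/
/-!
Testing the expansion on `f = id` gives `t = φ t + e (t + a) * φ t ^ n` near `0`, with `e → 0`.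
As `φ` is differentiable with `φ 0 = 0`, `φ t = O(t)`, so `φ t - t = o(tⁿ)`. By Taylor's theorem
with Peano remainder, the Taylor polynomial of order `n` of `φ - id` at `0` is then `o(tⁿ)` too,
and a polynomial of degree at most `n` that is `o(tⁿ)` is zero: all derivatives of `φ - id` of
order at most `n` vanish at `0`.
-/

open Filter Topology Asymptotics Finset

section
variable {α 𝕜 E : Type*} [NontriviallyNormedField 𝕜] [NormedAddCommGroup E] [NormedSpace 𝕜 E]

theorem frequently_pow_sub_ne_zero (x₀ : 𝕜) (n : ℕ) : ∃ᶠ x in 𝓝 x₀, (x - x₀) ^ n ≠ 0 :=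
  (Eventually.frequently <| eventually_nhdsWithin_of_forall (s := {x₀}ᶜ) fun _ hx =>
    pow_ne_zero n (sub_ne_zero.2 hx)).filter_mono nhdsWithin_le_nhds

namespace Asymptotics

theorem IsLittleO.eq_zero_of_smul_const {l : Filter α} {g : α → 𝕜} {v : E}
    (hg : ∃ᶠ x in l, g x ≠ 0) (h : (fun x => g x • v) =o[l] g) : v = 0 := by
  by_contra hv
  refine isLittleO_irrefl hg (isLittleO_norm_left.1 ?_)
  have := (isLittleO_norm_left.2 h).const_mul_left (c := ‖v‖⁻¹)
  simpa [norm_smul, hv, mul_comm ‖g _‖] using this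

theorem isBigO_smul_const (l : Filter α) (g : α → 𝕜) (v : E) :
    (fun x => g x • v) =O[l] g :=
  .of_bound ‖v‖ <| .of_forall fun x => by rw [norm_smul, mul_comm]

theorem isLittleO_pow_succ_sub_pow_sub (x₀ : 𝕜) (n : ℕ) :
    (fun x => (x - x₀) ^ (n + 1)) =o[𝓝 x₀] fun x => (x - x₀) ^ n :=
  (isLittleO_pow_pow n.lt_succ_self).comp_tendsto (tendsto_sub_nhds_zero_iff.2 tendsto_id)

theorem eq_zero_of_sum_pow_sub_smul_isLittleO {x₀ : 𝕜} {c : ℕ → E} {n : ℕ}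
    (h : (fun x => ∑ k ∈ range (n + 1), (x - x₀) ^ k • c k) =o[𝓝 x₀] fun x => (x - x₀) ^ n) :
    ∀ k ≤ n, c k = 0 := by
  induction n with
  | zero =>
    intro k hk
    obtain rfl : k = 0 := by omega
    simp only [zero_add, sum_range_one] at h
    exact h.eq_zero_of_smul_const (frequently_pow_sub_ne_zero x₀ 0)
  | succ n ih =>
    simp only [sum_range_succ _ (n + 1)] at h
    have hpow := isLittleO_pow_succ_sub_pow_sub x₀ n
    have hlow : ∀ k ≤ n, c k = 0 := ih <| by
      simpa using (h.trans hpow).sub ((isBigO_smul_const _ _ (c (n + 1))).trans_isLittleO hpow)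
    have htop : c (n + 1) = 0 := by
      refine IsLittleO.eq_zero_of_smul_const (frequently_pow_sub_ne_zero x₀ (n + 1)) ?_
      have hsum (x : 𝕜) : ∑ k ∈ range (n + 1), (x - x₀) ^ k • c k = 0 :=
        sum_eq_zero fun k hk => by rw [hlow k (Nat.lt_succ_iff.1 (mem_range.1 hk)), smul_zero]
      simpa only [hsum, zero_add] using h
    intro k hk
    rcases hk.lt_or_eq with hk | rfl
    exacts [hlow k (by omega), htop]
end Asymptotics

end

theorem iteratedDeriv_eq_zero_of_isLittleO_pow_sub {E : Type*} [NormedAddCommGroup E]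
    [NormedSpace ℝ E] {f : ℝ → E} {s : Set ℝ} {x₀ : ℝ} {n : ℕ} (hs : s ∈ 𝓝 x₀)
    (hf : ContDiffOn ℝ n f s) (ho : f =o[𝓝 x₀] fun x => (x - x₀) ^ n) :
    ∀ k ≤ n, iteratedDeriv k f x₀ = 0 := by
  obtain ⟨r, hr, hball⟩ := Metric.mem_nhds_iff.1 hs
  have hopen := Metric.isOpen_ball (x := x₀) (ε := r)
  have hx₀ : x₀ ∈ Metric.ball x₀ r := Metric.mem_ball_self hr
  have htaylor := taylor_isLittleO (convex_ball x₀ r) hx₀ (hf.mono hball)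
  rw [nhdsWithin_eq_nhds.2 (hopen.mem_nhds hx₀)] at htaylor
  have hcoeff := eq_zero_of_sum_pow_sub_smul_isLittleO (c := fun k =>
    taylorCoeffWithin f k (Metric.ball x₀ r) x₀) <| by
    simpa [taylorCoeffWithin, taylor_within_apply, mul_smul, smul_comm _ ((_ : ℝ) ^ _)]
      using ho.sub htaylor
  intro k hk
  simpa [taylorCoeffWithin, iteratedDerivWithin_of_isOpen hopen hx₀, Nat.factorial_ne_zero]
    using hcoeff k hk

theorem isLittleO_sub_self_of_eq_add_mul_pow {𝕜 : Type*} [NontriviallyNormedField 𝕜]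
    {φ ε : 𝕜 → 𝕜} {n : ℕ} (hφ : DifferentiableAt 𝕜 φ 0) (hε : Tendsto ε (𝓝 0) (𝓝 0))
    (h : ∀ᶠ t in 𝓝 0, t = φ t + ε t * φ t ^ n) :
    (fun t => φ t - t) =o[𝓝 0] fun t => t ^ n := by
  have hε0 : ε 0 = 0 := tendsto_nhds_unique (tendsto_pure_nhds ε 0) (hε.mono_left (pure_le_nhds 0))
  have hφ0 : φ 0 = 0 := by simpa [hε0] using h.self_of_nhds.symm
  have hφO : φ =O[𝓝 0] fun t => t := by simpa [hφ0] using hφ.hasFDerivAt.isBigO_sub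
  have herr : (fun t => ε t * φ t ^ n) =o[𝓝 0] fun t => t ^ n := by
    simpa using ((isLittleO_one_iff 𝕜).2 hε).mul_isBigO (hφO.pow n)
  refine herr.neg_left.congr' ?_ .rfl
  filter_upwards [h] with t ht
  linear_combination ht

/-- necessity direction of the nonstandard Taylor theorem. -/
theorem nonstandard_taylor_necessity (n : ℕ) (hn : 1 ≤ n) (a : ℝ) (φ : ℝ → ℝ)
    (hφ : ∃ U ∈ nhds (0:ℝ), ContDiffOn ℝ (n+1) φ U)
    (H : ∀ f : ℝ → ℝ, ContDiff ℝ n f →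
      ∃ e : ℝ → ℝ, Tendsto e (nhds a) (nhds 0) ∧
        ∀ᶠ x in nhds a, f x = (∑ k ∈ Finset.range (n+1),
          iteratedDeriv k f a / (Nat.factorial k : ℝ) * (φ (x - a))^k)
          + e x * (φ (x - a))^n) :
    φ 0 = 0 ∧ deriv φ 0 = 1 ∧ ∀ k, 2 ≤ k → k ≤ n → iteratedDeriv k φ 0 = 0 := by
  obtain ⟨U, hU, hφU⟩ := hφ
  obtain ⟨e, he, hid⟩ := H id contDiff_id
  have htaylor_id (y : ℝ) :
      ∑ k ∈ range (n + 1), iteratedDeriv k id a / (Nat.factorial k : ℝ) * y ^ k = a + y := by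
    obtain ⟨m, rfl⟩ := Nat.exists_eq_add_of_le' hn
    simp [sum_range_succ', iteratedDeriv_id, add_comm a]
  have hshift : Tendsto (· + a) (𝓝 0) (𝓝 a) := by
    simpa using (continuous_add_const a).tendsto 0
  have hexp : ∀ᶠ t in 𝓝 0, t = φ t + e (t + a) * φ t ^ n := by
    filter_upwards [hshift.eventually hid] with t ht
    simp only [id, add_sub_cancel_right, htaylor_id] at ht
    linarith
  have hφ₀ : ContDiffAt ℝ (n + 1) φ 0 := hφU.contDiffAt hU
  have hsub := isLittleO_sub_self_of_eq_add_mul_pow (hφ₀.differentiableAt (by simp))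
    (he.comp hshift) hexp
  have hderiv (k : ℕ) (hk : k ≤ n) : iteratedDeriv k φ 0 = iteratedDeriv k id 0 := by
    have := iteratedDeriv_eq_zero_of_isLittleO_pow_sub (f := φ - id) hU
      ((hφU.of_le (by norm_cast; omega)).sub contDiffOn_id) (by simp_rw [sub_zero]; exact hsub) k hk
    rwa [iteratedDeriv_sub (hφ₀.of_le (by norm_cast; omega)) contDiffAt_id, sub_eq_zero] at this
  refine ⟨by simpa using hderiv 0 n.zero_le, by simpa using hderiv 1 hn, fun k hk₂ hkn => ?_⟩
  simpa [iteratedDeriv_id, show k ≠ 0 by omega, show k ≠ 1 by omega] using hderiv k hkn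
end

section
/- Let n ≥ 1, a < x, and suppose f is (n+1)-times continuously differentiable on a neighborhood of [a, x], and φ satisfies φ(0) = 0, φ'(0) = 1, and φ^(k)(0) = 0 for 2 ≤ k ≤ n, with φ (n+1)-times continuously differentiable. Then f(x) = ∑_{k=0}^{n} (f^(k)(a)/k!) (φ(x-a))^k + e_n(x) (φ(x-a))^n, where e_n(x) = O(x - a) as x → a. -/
open Filter Asymptotics Topology

/-!
Put `t = x - a`. Taylor's theorem gives `f (a + t) = ∑_{k ≤ n} f⁽ᵏ⁾(a)/k! tᵏ + O(tⁿ⁺¹)`, and the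
hypotheses on `φ` say that its own Taylor polynomial of order `n` at `0` is `t`, so
`φ t = t + O(tⁿ⁺¹)`. Hence `φ tᵏ - tᵏ = O(tⁿ⁺¹)` for every `k`, and replacing `tᵏ` by `φ tᵏ` in the
expansion of `f` costs only `O(tⁿ⁺¹)`. Since `φ t = t + o(t)`, also `t = O(φ t)`, so the remainder
is `O(t · φ tⁿ)`, i.e. of the form `e · φ tⁿ` with `e = O(t)`.
-/

theorem ContDiff.isBigO_sub_taylorWithinEval {E : Type*} [NormedAddCommGroup E]
    [NormedSpace ℝ E] {f : ℝ → E} {n : ℕ} (hf : ContDiff ℝ (n + 1) f) (x₀ : ℝ) :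
    (fun x => f x - taylorWithinEval f n Set.univ x₀ x) =O[𝓝 x₀] fun x => (x - x₀) ^ (n + 1) := by
  have hsucc := (taylor_isLittleO_univ (x₀ := x₀) (n := n + 1) (by exact_mod_cast hf)).isBigO
  have hterm : (fun x => (((n + 1 : ℝ) * n.factorial)⁻¹ * (x - x₀) ^ (n + 1)) •
      iteratedDerivWithin (n + 1) f Set.univ x₀) =O[𝓝 x₀] fun x => (x - x₀) ^ (n + 1) := by
    simpa using (isBigO_const_mul_self _ (fun x => (x - x₀) ^ (n + 1)) (𝓝 x₀)).smul
      (isBigO_const_one ℝ (iteratedDerivWithin (n + 1) f Set.univ x₀) (𝓝 x₀))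
  refine (hsucc.add hterm).congr_left fun x => ?_
  rw [taylorWithinEval_succ]
  abel

theorem taylorWithinEval_univ_eq_sum (f : ℝ → ℝ) (n : ℕ) (x₀ x : ℝ) :
    taylorWithinEval f n Set.univ x₀ x =
      ∑ k ∈ Finset.range (n + 1), iteratedDeriv k f x₀ / k.factorial * (x - x₀) ^ k := by
  simp only [taylor_within_apply, iteratedDerivWithin_univ, smul_eq_mul]
  exact Finset.sum_congr rfl fun k _ => by ring

theorem isBigO_sub_id_of_iteratedDeriv_eq {φ : ℝ → ℝ} {n : ℕ} (hn : 1 ≤ n)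
    (hφ : ContDiff ℝ (n + 1) φ) (h0 : φ 0 = 0) (h1 : deriv φ 0 = 1)
    (hk : ∀ k, 2 ≤ k → k ≤ n → iteratedDeriv k φ 0 = 0) :
    (fun t => φ t - t) =O[𝓝 0] fun t => t ^ (n + 1) := by
  have htaylor (t : ℝ) : taylorWithinEval φ n Set.univ 0 t = t := by
    rw [taylorWithinEval_univ_eq_sum, Finset.sum_eq_single 1]
    · simp [h1]
    · intro k hkn hk1
      rcases Nat.lt_or_gt_of_ne hk1 with hlt | hgt
      · simp [Nat.lt_one_iff.mp hlt, h0]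
      · simp [hk k hgt (Finset.mem_range_succ_iff.mp hkn)]
    · simp only [Finset.mem_range]
      omega
  simpa [htaylor] using hφ.isBigO_sub_taylorWithinEval 0

theorem Asymptotics.IsBigO.pow_sub_pow {α R F : Type*} [SeminormedCommRing R]
    [SeminormedAddCommGroup F] {l : Filter α} {g h : α → R} {w : α → F}
    (hg : g =O[l] (fun _ => (1 : ℝ))) (hh : h =O[l] (fun _ => (1 : ℝ)))
    (hgh : (fun x => g x - h x) =O[l] w) (k : ℕ) :
    (fun x => g x ^ k - h x ^ k) =O[l] w := by
  have hsum : (fun x => ∑ i ∈ Finset.range k, g x ^ i * h x ^ (k - 1 - i))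
      =O[l] fun _ => (1 : ℝ) :=
    IsBigO.fun_sum fun i _ => by simpa using (hg.pow i).mul (hh.pow (k - 1 - i))
  have hprod := hsum.mul hgh.norm_right
  simp only [geom_sum₂_mul, one_mul] at hprod
  exact isBigO_norm_right.mp hprod

/-- nonstandard Taylor theorem, sufficiency direction. -/
theorem nonstandard_taylor_sufficiency (n : ℕ) (hn : 1 ≤ n) (a : ℝ) (f φ : ℝ → ℝ)
    (hf : ContDiff ℝ (n+1) f) (hφs : ContDiff ℝ (n+1) φ)
    (h0 : φ 0 = 0) (h1 : deriv φ 0 = 1)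
    (hk : ∀ k, 2 ≤ k → k ≤ n → iteratedDeriv k φ 0 = 0) :
    ∃ e : ℝ → ℝ, (e =O[nhds a] fun x => x - a) ∧
      ∀ᶠ x in nhds a, f x = (∑ k ∈ Finset.range (n+1),
        iteratedDeriv k f a / (Nat.factorial k : ℝ) * (φ (x - a))^k)
        + e x * (φ (x - a))^n := by
  have hu : Tendsto (fun x : ℝ => x - a) (𝓝 a) (𝓝 0) :=
    tendsto_sub_nhds_zero_iff.mpr tendsto_id
  have hφ : (fun x => φ (x - a) - (x - a)) =O[𝓝 a] fun x => (x - a) ^ (n + 1) :=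
    (isBigO_sub_id_of_iteratedDeriv_eq hn hφs h0 h1 hk).comp_tendsto hu
  have hu_φ : (fun x => x - a) =O[𝓝 a] fun x => φ (x - a) := by
    have hφ_o := hφ.trans_isLittleO
      ((isLittleO_pow_pow (𝕜 := ℝ) (by omega : 1 < n + 1)).comp_tendsto hu)
    simpa [Function.comp_def] using hφ_o.right_isBigO_add
  have hpow (k : ℕ) :
      (fun x => φ (x - a) ^ k - (x - a) ^ k) =O[𝓝 a] fun x => (x - a) ^ (n + 1) :=
    ((hφs.continuous.comp (continuous_sub_right a)).continuousAt.isBigO_one ℝ).pow_sub_pow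
      ((continuous_sub_right a).continuousAt.isBigO_one ℝ) hφ k
  have hD : (fun x => f x - ∑ k ∈ Finset.range (n + 1),
      iteratedDeriv k f a / k.factorial * φ (x - a) ^ k) =O[𝓝 a]
      fun x => (x - a) * φ (x - a) ^ n := by
    have hsum := (hf.isBigO_sub_taylorWithinEval a).sub
      (IsBigO.fun_sum (s := Finset.range (n + 1))
        fun k _ => (hpow k).const_mul_left (iteratedDeriv k f a / k.factorial))
    refine (hsum.congr_left fun x => ?_).trans ?_
    · simp only [taylorWithinEval_univ_eq_sum, mul_sub, Finset.sum_sub_distrib]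
      ring
    · simpa [pow_succ'] using (isBigO_refl (fun x => x - a) (𝓝 a)).mul (hu_φ.pow n)
  obtain ⟨ψ, hψ, hDψ⟩ := hD.exists_eq_mul
  refine ⟨fun x => ψ x * (x - a), ?_, ?_⟩
  · simpa using ((isBigO_one_iff ℝ).mpr hψ).mul (isBigO_refl (fun x => x - a) (𝓝 a))
  · filter_upwards [hDψ] with x hx
    simp only [Pi.mul_apply] at hx
    linear_combination hx
end

section
/- Consider the logistic equation y' = y(c - y) with c > 0 and its forward Euler iteration v^{n+1} = v^n(1 + cΔt - Δt·v^n). If 0 < v^0 < c and 0 < Δt ≤ 1/c, then for all n: 0 < v^n < c and v^{n+1} ≥ v^n (the iteration is monotone increasing and stays in (0, c)). -/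
/-- forward Euler for logistic equation, 0 < v⁰ < c, Δt ≤ 1/c. -/
theorem euler_logistic_monotone (c Δt : ℝ) (hc : 0 < c) (hΔ : 0 < Δt)
    (hΔc : Δt ≤ 1 / c) (v : ℕ → ℝ)
    (hrec : ∀ n, v (n+1) = v n * (1 + c * Δt - Δt * v n))
    (h0 : 0 < v 0) (h0c : v 0 < c) :
    ∀ n, (0 < v n ∧ v n < c) ∧ v n ≤ v (n+1) := by
  have hΔc' : Δt * c ≤ 1 := by
    rw [div_eq_inv_mul, mul_one] at hΔc
    calc Δt * c ≤ c⁻¹ * c := by nlinarith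
    _ = 1 := inv_mul_cancel₀ hc.ne'
  have key : ∀ n, 0 < v n ∧ v n < c := by
    intro n
    induction n with
    | zero => exact ⟨h0, h0c⟩
    | succ k ih =>
      obtain ⟨hp, hlt⟩ := ih
      rw [hrec k]
      have h1 : 0 < Δt * (c - v k) := mul_pos hΔ (by linarith)
      have h2 : Δt * v k < 1 := by nlinarith [mul_lt_mul_of_pos_left hlt hΔ]
      constructor
      · nlinarith [mul_pos hp h1]
      · nlinarith [mul_pos (sub_pos.mpr hlt) (by linarith : (0:ℝ) < 1 - Δt * v k)]
  intro n
  refine ⟨key n, ?_⟩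
  obtain ⟨hp, hlt⟩ := key n
  rw [hrec n]
  nlinarith [mul_pos hp (mul_pos hΔ (by linarith : (0:ℝ) < c - v n))]
end

section
/- Consider the forward Euler iteration v^{n+1} = v^n(1 + cΔt - Δt·v^n) with c > 0 and initial value v^0 = ỹ > c. If 0 < Δt ≤ min{1/c, 1/ỹ}, then for all n: c ≤ v^{n+1} ≤ v^n ≤ ỹ, i.e., the sequence is monotone decreasing and bounded below by c. -/
/-- forward Euler for logistic equation started above c. -/
theorem euler_logistic_above (c Δt ytilde : ℝ) (hc : 0 < c) (hΔ : 0 < Δt)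
    (hΔ1 : Δt ≤ 1 / c) (hΔ2 : Δt ≤ 1 / ytilde)
    (v : ℕ → ℝ)
    (hrec : ∀ n, v (n+1) = v n * (1 + c * Δt - Δt * v n))
    (h0 : v 0 = ytilde) (hy : c < ytilde) :
    ∀ n, c ≤ v (n+1) ∧ v (n+1) ≤ v n ∧ v n ≤ ytilde := by
  have hy0 : 0 < ytilde := hc.trans hy
  have hty : Δt * ytilde ≤ 1 := (le_div_iff₀ hy0).mp hΔ2
  have inv : ∀ n, c ≤ v n ∧ v n ≤ ytilde := by
    intro n
    induction n with
    | zero => exact ⟨h0 ▸ hy.le, h0.le⟩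
    | succ k ih =>
      obtain ⟨h1, h2⟩ := ih
      have htx : Δt * v k ≤ 1 := le_trans (by nlinarith) hty
      constructor
      · rw [hrec k]; nlinarith
      · have : v (k+1) ≤ v k := by
          rw [hrec k]
          nlinarith [mul_nonneg (mul_nonneg hΔ.le (sub_nonneg.2 h1)) (hc.le.trans h1)]
        exact this.trans h2
  intro n
  obtain ⟨h1, h2⟩ := inv n
  have htx : Δt * v n ≤ 1 := le_trans (by nlinarith) hty
  refine ⟨by rw [hrec n]; nlinarith, by
    rw [hrec n]
    nlinarith [mul_nonneg (mul_nonneg hΔ.le (sub_nonneg.2 h1)) (hc.le.trans h1)], h2⟩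
end

section
/- Let f: ℝ^m → ℝ^m and suppose the forward Euler step preserves the upper bound for component k: for any v ∈ ℝ^m with v_k ≤ M and any step size h with 0 < h ≤ B_FE, we have v_k + h·f_k(v) ≤ M. Consider the multistep iteration u^{n+1} = ∑_{j=1}^{s} (α_j u^{n+1-j} + φ(Δt)·β_j f(u^{n+1-j})) with α_j, β_j ≥ 0, β_j = 0 whenever α_j = 0, ∑_{j=1}^s α_j = 1, and φ(Δt) ≤ C·B_FE where C = min_j α_j/β_j (the minimum over j with β_j > 0). If u_k^0, ..., u_k^{s-1} ≤ M, then u_k^n ≤ M for all n ≥ s and all Δt ≥ 0. -/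
open Finset

/-- One term `a v + φ b f(v)` of the SSP form is `a` times a forward Euler step of size
`φ b / a`, which is admissible exactly when `φ ≤ (a / b) B`. -/
lemma weighted_euler_step_le {x d M B a b φ : ℝ} (ha : 0 ≤ a) (hb : 0 ≤ b)
    (hab : a = 0 → b = 0) (hφ0 : 0 ≤ φ) (hφ : b ≠ 0 → φ ≤ a / b * B) (hx : x ≤ M)
    (heuler : ∀ h : ℝ, 0 < h → h ≤ B → x + h * d ≤ M) :
    a * x + φ * b * d ≤ a * M := by
  rcases (mul_nonneg hφ0 hb).eq_or_lt with hφb | hφb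
  · rw [← hφb, zero_mul, add_zero]
    exact mul_le_mul_of_nonneg_left hx ha
  have hb0 : b ≠ 0 := by rintro rfl; simp at hφb
  have ha0 : 0 < a := ha.lt_of_ne fun h => hb0 (hab h.symm)
  have hstep : φ * b / a ≤ B := by
    rw [div_le_iff₀ ha0]
    calc φ * b ≤ a / b * B * b := mul_le_mul_of_nonneg_right (hφ hb0) hb
      _ = B * a := by field_simp
  calc a * x + φ * b * d = a * (x + φ * b / a * d) := by field_simp
    _ ≤ a * M := mul_le_mul_of_nonneg_left (heuler _ (div_pos hφb ha0) hstep) ha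

lemma sum_weighted_euler_steps_le {ι : Type*} (t : Finset ι) {x d α β : ι → ℝ}
    {M B φ : ℝ} (hα : ∀ j, 0 ≤ α j) (hβ : ∀ j, 0 ≤ β j) (hβα : ∀ j, α j = 0 → β j = 0)
    (hsum : ∑ j ∈ t, α j = 1) (hφ0 : 0 ≤ φ) (hφ : ∀ j, β j ≠ 0 → φ ≤ α j / β j * B)
    (hx : ∀ j ∈ t, x j ≤ M) (heuler : ∀ j ∈ t, ∀ h : ℝ, 0 < h → h ≤ B → x j + h * d j ≤ M) :
    ∑ j ∈ t, (α j * x j + φ * β j * d j) ≤ M :=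
  calc ∑ j ∈ t, (α j * x j + φ * β j * d j)
      ≤ ∑ j ∈ t, α j * M := sum_le_sum fun j hj =>
        weighted_euler_step_le (hα j) (hβ j) (hβα j) hφ0 (hφ j) (hx j hj) (heuler j hj)
    _ = M := by rw [← sum_mul, hsum, one_mul]

theorem multistep_preserves_bound_general (m s : ℕ) (hs : 1 ≤ s)
    (f : (Fin m → ℝ) → (Fin m → ℝ)) (k : Fin m) (M BFE : ℝ)
    (heuler : ∀ v : Fin m → ℝ, v k ≤ M → ∀ h : ℝ, 0 < h → h ≤ BFE →
      v k + h * f v k ≤ M)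
    (α β : Fin s → ℝ) (hα : ∀ j, 0 ≤ α j) (hβ : ∀ j, 0 ≤ β j)
    (hβα : ∀ j, α j = 0 → β j = 0) (hsum : ∑ j, α j = 1)
    (φΔt : ℝ) (hφ0 : 0 ≤ φΔt) (hφ : ∀ j, β j ≠ 0 → φΔt ≤ α j / β j * BFE)
    (u : ℕ → Fin m → ℝ)
    (hrec : ∀ n, s - 1 ≤ n → u (n+1) = fun i =>
      ∑ j, (α j * u (n - j.val) i + φΔt * β j * f (u (n - j.val)) i))
    (hinit : ∀ n < s, u n k ≤ M) :
    ∀ n, s ≤ n → u n k ≤ M := by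
  suffices h : ∀ n, u n k ≤ M from fun n _ => h n
  intro n
  induction n using Nat.strong_induction_on with
  | _ n ih =>
    rcases lt_or_ge n s with hlt | hge
    · exact hinit n hlt
    obtain ⟨p, rfl⟩ : ∃ p, n = p + 1 := ⟨n - 1, by omega⟩
    have hprev : ∀ j : Fin s, u (p - j.val) k ≤ M := fun j => ih _ (by omega)
    rw [hrec p (by omega)]
    exact sum_weighted_euler_steps_le univ hα hβ hβα hsum hφ0 hφ (fun j _ => hprev j)
      fun j _ => heuler _ (hprev j)

/-- the SSP-form nonstandard multistep method preserves the upper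
bound M in component k, for any step size, provided φ(Δt) ≤ C·B_FE where
C = min_{j : β_j > 0} α_j/β_j (expressed as φΔt ≤ (α j / β j)·B_FE for each such j). -/
theorem multistep_preserves_bound (m s : ℕ) (hs : 1 ≤ s)
    (f : (Fin m → ℝ) → (Fin m → ℝ)) (k : Fin m) (M BFE : ℝ) (hBFE : 0 < BFE)
    (heuler : ∀ v : Fin m → ℝ, v k ≤ M → ∀ h : ℝ, 0 < h → h ≤ BFE →
      v k + h * f v k ≤ M)
    (α β : Fin s → ℝ) (hα : ∀ j, 0 ≤ α j) (hβ : ∀ j, 0 ≤ β j)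
    (hβα : ∀ j, α j = 0 → β j = 0) (hsum : ∑ j, α j = 1)
    (φΔt : ℝ) (hφ0 : 0 ≤ φΔt) (hφ : ∀ j, β j ≠ 0 → φΔt ≤ α j / β j * BFE)
    (u : ℕ → Fin m → ℝ)
    (hrec : ∀ n, s - 1 ≤ n → u (n+1) = fun i =>
      ∑ j, (α j * u (n - j.val) i + φΔt * β j * f (u (n - j.val)) i))
    (hinit : ∀ n < s, u n k ≤ M) :
    ∀ n, s ≤ n → u n k ≤ M :=
  multistep_preserves_bound_general m s hs f k M BFE heuler α β hα hβ hβα hsum φΔt hφ0 hφ u hrec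
    hinit
end

section
/- Under the same SSP multistep setting (α_j, β_j ≥ 0, ∑ α_j = 1, β_j = 0 if α_j = 0, φ(Δt) ≤ C·B_FE with C = min_j α_j/β_j), suppose the forward Euler step with step h ≤ B_FE preserves the interval (A, B) for component k and satisfies v_k + h·f_k(v) ≥ v_k whenever v_k ∈ (A, B). If the starting values satisfy u_k^0, ..., u_k^{s-1} ∈ (A, B), then for every n ≥ s: u_k^{n+1} ≥ min{u_k^{n-s+1}, u_k^{n-s+2}, ..., u_k^n}, for any step size Δt ≥ 0. -/
/-!
Each stage `α_j u^{n-j} + φ(Δt) β_j f(u^{n-j})` of the multistep method equals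
`α_j (u^{n-j} + h_j f(u^{n-j}))` with `h_j = φ(Δt) β_j / α_j ≤ B_FE`, i.e. `α_j` times a forward
Euler step. Forward Euler keeps component `k` inside the convex set `(A, B) ∩ [c, ∞)` whenever it
starts there, so the convex combination `u^{n+1}` of these steps lies there too. With `c = A`
this shows by induction that all iterates stay in `(A, B)`; with `c` the minimum of the previous
`s` values it gives the lower bound.
-/

theorem exists_stage_eq_mul_forwardEuler {S : Set ℝ} {BFE a b φ x g : ℝ}
    (ha : 0 ≤ a) (hb : 0 ≤ b) (hφ0 : 0 ≤ φ) (hφ : b ≠ 0 → φ ≤ a / b * BFE)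
    (hx : x ∈ S) (heuler : ∀ h, 0 < h → h ≤ BFE → x + h * g ∈ S) :
    ∃ w ∈ S, a * x + φ * b * g = a * w := by
  by_cases hφb : φ * b = 0
  · exact ⟨x, hx, by rw [hφb, zero_mul, add_zero]⟩
  have hb' : 0 < b := hb.lt_of_ne (right_ne_zero_of_mul hφb).symm
  have hφ' : 0 < φ := hφ0.lt_of_ne (left_ne_zero_of_mul hφb).symm
  have hbound : φ * b ≤ a * BFE := by
    have := hφ hb'.ne'
    rwa [div_mul_eq_mul_div, le_div_iff₀ hb'] at this
  have ha' : 0 < a := by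
    rcases ha.eq_or_lt with rfl | ha'
    · nlinarith [mul_pos hφ' hb']
    · exact ha'
  refine ⟨x + φ * b / a * g, heuler _ (by positivity) ((div_le_iff₀ ha').2 (by linarith)), ?_⟩
  field_simp

theorem sum_stage_mem_of_convex {ι : Type*} [Fintype ι] {S : Set ℝ} (hS : Convex ℝ S)
    {BFE φ : ℝ} {α β x g : ι → ℝ} (hα : ∀ j, 0 ≤ α j) (hβ : ∀ j, 0 ≤ β j)
    (hsum : ∑ j, α j = 1) (hφ0 : 0 ≤ φ) (hφ : ∀ j, β j ≠ 0 → φ ≤ α j / β j * BFE)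
    (hx : ∀ j, x j ∈ S) (heuler : ∀ j, ∀ h, 0 < h → h ≤ BFE → x j + h * g j ∈ S) :
    ∑ j, (α j * x j + φ * β j * g j) ∈ S := by
  choose w hwS hw using fun j =>
    exists_stage_eq_mul_forwardEuler (hα j) (hβ j) hφ0 (hφ j) (hx j) (heuler j)
  simp only [hw]
  exact hS.sum_mem (fun j _ => hα j) hsum (fun j _ => hwS j)

theorem Nat.forall_of_window {s : ℕ} {P : ℕ → Prop} (hs : 0 < s) (hbase : ∀ n < s, P n)
    (hstep : ∀ n, s - 1 ≤ n → (∀ j < s, P (n - j)) → P (n + 1)) : ∀ n, P n := by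
  intro n
  induction n using Nat.strong_induction_on with
  | _ n ih =>
    rcases lt_or_ge n s with hn | hn
    · exact hbase n hn
    · obtain ⟨p, rfl⟩ : ∃ p, n = p + 1 := ⟨n - 1, by omega⟩
      exact hstep p (by omega) fun j _ => ih (p - j) (by omega)

/-- weak monotonicity preservation by the SSP-form nonstandard
multistep method: u_k^{n+1} is bounded below by the minimum of the previous s values. -/
theorem multistep_weak_monotonicity (m s : ℕ) (hs : 1 ≤ s)
    (f : (Fin m → ℝ) → (Fin m → ℝ)) (k : Fin m) (A B BFE : ℝ)
    (heuler : ∀ v : Fin m → ℝ, v k ∈ Set.Ioo A B → ∀ h : ℝ, 0 < h → h ≤ BFE →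
      (v k + h * f v k ∈ Set.Ioo A B ∧ v k ≤ v k + h * f v k))
    (α β : Fin s → ℝ) (hα : ∀ j, 0 ≤ α j) (hβ : ∀ j, 0 ≤ β j)
    (hsum : ∑ j, α j = 1)
    (φΔt : ℝ) (hφ0 : 0 ≤ φΔt) (hφ : ∀ j, β j ≠ 0 → φΔt ≤ α j / β j * BFE)
    (u : ℕ → Fin m → ℝ)
    (hrec : ∀ n, s - 1 ≤ n → u (n+1) = fun i =>
      ∑ j, (α j * u (n - j.val) i + φΔt * β j * f (u (n - j.val)) i))
    (hinit : ∀ n < s, u n k ∈ Set.Ioo A B) :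
    ∀ n, ∀ hn : s ≤ n,
      (Finset.Icc (n - s + 1) n).inf'
        (Finset.nonempty_Icc.mpr (by omega)) (fun ℓ => u ℓ k) ≤ u (n+1) k := by
  have hstep : ∀ n, s - 1 ≤ n → ∀ c : ℝ,
      (∀ j : Fin s, u (n - j) k ∈ Set.Ioo A B ∩ Set.Ici c) →
      u (n + 1) k ∈ Set.Ioo A B ∩ Set.Ici c := by
    intro n hn c hwindow
    rw [hrec n hn]
    refine sum_stage_mem_of_convex ((convex_Ioo A B).inter (convex_Ici c)) hα hβ hsum hφ0 hφ
      hwindow fun j h hh hhB => ?_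
    obtain ⟨hmem, hle⟩ := heuler _ (hwindow j).1 h hh hhB
    exact ⟨hmem, (hwindow j).2.trans hle⟩
  have hinv : ∀ n, u n k ∈ Set.Ioo A B := Nat.forall_of_window hs hinit fun n hn hwindow =>
    (hstep n hn A fun j => ⟨hwindow j j.isLt, (hwindow j j.isLt).1.le⟩).1
  intro n hn
  refine (hstep n (by omega) _ fun j => ⟨hinv _, ?_⟩).2
  exact Set.mem_Ici.2 (Finset.inf'_le _ (Finset.mem_Icc.2 (by have := j.isLt; omega)))
end

section
/- Let a consistent explicit linear multistep method ∑_{j=0}^{k} α_j u^{n+j} = Δt ∑_{j=0}^{k-1} β_j f(u^{n+j}) have order p, i.e., ∑_j α_j = 0 and ∑_j α_j j^q = q ∑_j β_j j^{q-1} for q = 1, ..., p. Suppose φ is (p+1)-times continuously differentiable with φ(0) = 0, φ'(0) = 1 and φ^(k)(0) = 0 for 2 ≤ k ≤ p. Then for any y ∈ C^{p+1}, the local truncation operator L(y, t, Δt) = ∑_{j=0}^{k} (α_j y(t + jΔt) - φ(Δt) β_j y'(t + jΔt)) satisfies L(y, t, Δt) = O((Δt)^{p+1}) as Δt → 0. 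-/
/-!
Expand `y(t + jΔt)` to order `p` and `y'(t + jΔt)` to order `p - 1` by Taylor's theorem with
remainders `O(Δt^(p+1))` and `O(Δt^p)`. The order conditions say exactly that the standard
method is exact on the Taylor polynomials: `∑ α_j P(jΔt) = Δt ∑ β_j P'(jΔt)`. What is left of
the truncation error is the `y`-remainder, `φ(Δt)` times the `y'`-remainder (with `φ(Δt) = O(Δt)`),
and `(φ(Δt) - Δt) ∑ β_j P'(jΔt)`, where `φ(Δt) - Δt = O(Δt^(p+1))` because `φ` agrees with the
identity to order `p` at `0`.
-/

open Filter Asymptotics Finset Set Topology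

theorem isBigO_sub_taylor_sum {E : Type*} [NormedAddCommGroup E] [NormedSpace ℝ E]
    {f : ℝ → E} {n : ℕ} (hf : ContDiff ℝ n f) (x₀ : ℝ) :
    (fun h => f (x₀ + h) - ∑ q ∈ range n, ((q.factorial : ℝ)⁻¹ * h ^ q) • iteratedDeriv q f x₀)
      =O[𝓝 0] (· ^ n) := by
  have hshift : Tendsto (fun h : ℝ => x₀ + h) (𝓝 0) (𝓝 x₀) := by
    simpa using (continuous_const_add x₀).tendsto 0
  have hlittle : (fun h => f (x₀ + h) - taylorWithinEval f n univ x₀ (x₀ + h)) =O[𝓝 0] (· ^ n) := by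
    simpa [Function.comp_def] using
      ((taylor_isLittleO_univ hf (x₀ := x₀)).comp_tendsto hshift).isBigO
  have hlast :
      (fun h : ℝ => ((n.factorial : ℝ)⁻¹ * h ^ n) • iteratedDeriv n f x₀) =O[𝓝 0] (· ^ n) := by
    simpa using ((isBigO_refl (fun h : ℝ => h ^ n) (𝓝 0)).const_mul_left (n.factorial : ℝ)⁻¹).smul
      (isBigO_const_one ℝ (iteratedDeriv n f x₀) (𝓝 (0 : ℝ)))
  refine (hlittle.add hlast).congr_left fun h => ?_
  simp only [taylor_within_apply, sum_range_succ, iteratedDerivWithin_univ, add_sub_cancel_left]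
  abel

theorem isBigO_pow_of_iteratedDeriv_eq_zero {E : Type*} [NormedAddCommGroup E]
    [NormedSpace ℝ E] {f : ℝ → E} {n : ℕ} (hf : ContDiff ℝ n f) {x₀ : ℝ}
    (hvanish : ∀ q < n, iteratedDeriv q f x₀ = 0) :
    (fun h => f (x₀ + h)) =O[𝓝 0] (· ^ n) := by
  have hsum (h : ℝ) : ∑ q ∈ range n, ((q.factorial : ℝ)⁻¹ * h ^ q) • iteratedDeriv q f x₀ = 0 :=
    sum_eq_zero fun q hq => by rw [hvanish q (mem_range.mp hq), smul_zero]
  simpa [hsum] using isBigO_sub_taylor_sum hf x₀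

theorem isBigO_pow_sum_comp_const_mul {f : ℝ → ℝ} {n : ℕ} (hf : f =O[𝓝 0] (· ^ n))
    (s : Finset ℕ) (c : ℕ → ℝ) : (fun h => ∑ j ∈ s, c j * f (j * h)) =O[𝓝 0] (· ^ n) := by
  refine IsBigO.fun_sum fun j _ => IsBigO.const_mul_left ?_ (c j)
  have hscale : Tendsto (fun h : ℝ => j * h) (𝓝 0) (𝓝 0) := by
    simpa using (continuous_const_mul (j : ℝ)).tendsto 0
  refine (hf.comp_tendsto hscale).trans ?_
  simpa [Function.comp_def, mul_pow] using
    (isBigO_refl (· ^ n) (𝓝 (0 : ℝ))).const_mul_left ((j : ℝ) ^ n)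

theorem sum_mul_taylor_sum_comm (k n : ℕ) (c a : ℕ → ℝ) (h : ℝ) :
    ∑ j ∈ range k, c j * ∑ q ∈ range n, ((q.factorial : ℝ)⁻¹ * (j * h) ^ q) * a q
      = ∑ q ∈ range n, ((q.factorial : ℝ)⁻¹ * h ^ q) * a q * ∑ j ∈ range k, c j * (j : ℝ) ^ q := by
  simp_rw [Finset.mul_sum]
  rw [Finset.sum_comm]
  refine sum_congr rfl fun q _ => sum_congr rfl fun j _ => ?_
  ring

theorem lmm_exact_on_taylor_sum {k p : ℕ} {α β : ℕ → ℝ}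
    (hcons : ∑ j ∈ range (k + 1), α j = 0)
    (horder : ∀ q, 1 ≤ q → q ≤ p →
      ∑ j ∈ range (k + 1), α j * (j : ℝ) ^ q = q * ∑ j ∈ range k, β j * (j : ℝ) ^ (q - 1))
    (D : ℕ → ℝ) (h : ℝ) :
    ∑ j ∈ range (k + 1), α j * ∑ q ∈ range (p + 1), ((q.factorial : ℝ)⁻¹ * (j * h) ^ q) * D q =
      h * ∑ j ∈ range k, β j *
        ∑ q ∈ range p, ((q.factorial : ℝ)⁻¹ * (j * h) ^ q) * D (q + 1) := by
  rw [sum_mul_taylor_sum_comm, sum_mul_taylor_sum_comm, sum_range_succ']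
  simp only [pow_zero, mul_one, hcons, mul_zero, add_zero]
  rw [Finset.mul_sum]
  refine sum_congr rfl fun q hq => ?_
  rw [horder (q + 1) (by omega) (by simpa using hq), Nat.add_sub_cancel, Nat.factorial_succ]
  push_cast
  field_simp
  ring

theorem isBigO_sub_id_of_iteratedDeriv {φ : ℝ → ℝ} {p : ℕ} (hφ : ContDiff ℝ (p + 1) φ)
    (h0 : φ 0 = 0) (h1 : deriv φ 0 = 1) (hder : ∀ i, 2 ≤ i → i ≤ p → iteratedDeriv i φ 0 = 0) :
    (fun h => φ h - h) =O[𝓝 0] (· ^ (p + 1)) := by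
  have hdiff : ContDiff ℝ ((p + 1 : ℕ) : WithTop ℕ∞) (fun h => φ h - h) := by
    exact_mod_cast hφ.sub contDiff_id
  refine (isBigO_pow_of_iteratedDeriv_eq_zero (x₀ := 0) hdiff fun q hq => ?_).congr_left
    fun h => by simp
  rw [iteratedDeriv_fun_sub (hφ.of_le (by exact_mod_cast hq.le)).contDiffAt
    contDiff_fun_id.contDiffAt, iteratedDeriv_fun_id_zero]
  match q, hq with
  | 0, _ => simp [h0]
  | 1, _ => simp [h1]
  | i + 2, hi => simp [hder (i + 2) (by omega) (by omega)]

/-- sufficiency direction of the order theorem for nonstandard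
linear multistep methods: the local truncation error is O((Δt)^{p+1}). -/
theorem nonstandard_lmm_order_sufficiency (k p : ℕ) (α β : ℕ → ℝ)
    (hcons : ∑ j ∈ Finset.range (k+1), α j = 0)
    (horder : ∀ q, 1 ≤ q → q ≤ p →
      ∑ j ∈ Finset.range (k+1), α j * (j:ℝ)^q
        = q * ∑ j ∈ Finset.range k, β j * (j:ℝ)^(q-1))
    (φ : ℝ → ℝ) (hφ : ContDiff ℝ (p+1) φ) (h0 : φ 0 = 0) (h1 : deriv φ 0 = 1)
    (hder : ∀ i, 2 ≤ i → i ≤ p → iteratedDeriv i φ 0 = 0)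
    (y : ℝ → ℝ) (hy : ContDiff ℝ (p+1) y) (t : ℝ) :
    (fun Δt : ℝ => ∑ j ∈ Finset.range (k+1), α j * y (t + j * Δt)
        - φ Δt * ∑ j ∈ Finset.range k, β j * deriv y (t + j * Δt))
      =O[nhds 0] fun Δt => Δt^(p+1) := by
  set Py : ℝ → ℝ := fun h =>
    ∑ q ∈ range (p + 1), ((q.factorial : ℝ)⁻¹ * h ^ q) * iteratedDeriv q y t
  set Pdy : ℝ → ℝ := fun h =>
    ∑ q ∈ range p, ((q.factorial : ℝ)⁻¹ * h ^ q) * iteratedDeriv (q + 1) y t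
  have hy_taylor : (fun h => y (t + h) - Py h) =O[𝓝 0] (· ^ (p + 1)) :=
    isBigO_sub_taylor_sum (n := p + 1) (by exact_mod_cast hy) t
  have hdy_taylor : (fun h => deriv y (t + h) - Pdy h) =O[𝓝 0] (· ^ p) := by
    simpa [Pdy, iteratedDeriv_succ'] using isBigO_sub_taylor_sum hy.deriv' t
  have hA : (fun h => ∑ j ∈ range (k + 1), α j * (y (t + j * h) - Py (j * h)))
      =O[𝓝 0] (· ^ (p + 1)) :=
    isBigO_pow_sum_comp_const_mul hy_taylor _ α
  have hB : (fun h => ∑ j ∈ range k, β j * (deriv y (t + j * h) - Pdy (j * h))) =O[𝓝 0] (· ^ p) :=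
    isBigO_pow_sum_comp_const_mul hdy_taylor _ β
  have hφ_lin : (fun h => φ h) =O[𝓝 0] fun h => h := by
    simpa [h0] using ((hφ.differentiable (by simp)).differentiableAt (x := 0)).hasDerivAt.isBigO_sub
  have hPdy_bdd : (fun h => ∑ j ∈ range k, β j * Pdy (j * h)) =O[𝓝 0] (fun _ => (1 : ℝ)) :=
    ((by fun_prop : Continuous fun h => ∑ j ∈ range k, β j * Pdy (j * h)).tendsto 0).isBigO_one ℝ
  have hexact (h : ℝ) : ∑ j ∈ range (k + 1), α j * Py (j * h)
      = h * ∑ j ∈ range k, β j * Pdy (j * h) :=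
    lmm_exact_on_taylor_sum hcons horder (fun q => iteratedDeriv q y t) h
  have hφB : (fun h => φ h * ∑ j ∈ range k, β j * (deriv y (t + j * h) - Pdy (j * h)))
      =O[𝓝 0] (· ^ (p + 1)) := by
    simpa [← pow_succ'] using hφ_lin.mul hB
  have hφP : (fun h => (φ h - h) * ∑ j ∈ range k, β j * Pdy (j * h)) =O[𝓝 0] (· ^ (p + 1)) := by
    simpa using (isBigO_sub_id_of_iteratedDeriv hφ h0 h1 hder).mul hPdy_bdd
  refine ((hA.sub hφB).sub hφP).congr_left fun h => ?_
  simp only [mul_sub, sum_sub_distrib, hexact]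
  ring
end
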